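/- An [n,k,d] Griesmer code over F_q is projective (i.e., no two columns of its generator matrix are proportional) if and only if d ≤ q^{k−1}. -/

import Mathlib

/-!
If `d > q^(k-1)` then every term of the Griesmer sum satisfies `⌈d/q^i⌉ ≥ q^(k-1-i) + 1`, so
`n > 1 + q + ⋯ + q^(k-1) = |PG(k-1, q)|`, and two columns span the same projective point.
Conversely, if two columns are proportional, the codewords vanishing on one of them vanish on
both, and deleting those two coordinates from them leaves a code of dimension `≥ k-1` and minimum
distance `≥ d` on `n-2` coordinates. The Griesmer bound then gives `n - 2 ≥ g_q(k-1, d)`, whereas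
`n = g_q(k-1, d) + ⌈d/q^(k-1)⌉ ≤ g_q(k-1, d) + 1` when `d ≤ q^(k-1)`.

The Griesmer bound is proved by induction on the dimension, passing to the residual code on the
zero set of a minimum weight codeword `u`: for `v` not a multiple of `u`, some ratio `α = v i / u i`
occurs on at least `⌈wt u / q⌉` coordinates of the support of `u`, and `wt (v - α u) ≥ wt u` forces
`v` to have at least that many nonzero entries off the support of `u`.
-/

/-- Hamming weight of a vector. -/
noncomputable def wt {ι F : Type*} [Zero F] (c : ι → F) : ℕ :=
  Nat.card {i // c i ≠ 0}

/-- Griesmer sum `g_q(k,d) = ∑_{i<k} ⌈d / q^i⌉` (using `(d + q^i - 1)/q^i`). -/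
def gbound (q k d : ℕ) : ℕ :=
  ∑ i ∈ Finset.range k, (d + q ^ i - 1) / q ^ i

open Finset Module

lemma wt_eq_hammingNorm {ι F : Type*} [Fintype ι] [Zero F] [DecidableEq F] (c : ι → F) :
    wt c = hammingNorm c := by
  rw [wt, Nat.card_eq_fintype_card, Fintype.card_subtype, hammingNorm]

lemma hammingNorm_comp_subtypeVal {ι F : Type*} [Fintype ι] [Zero F] [DecidableEq F]
    (p : ι → Prop) [DecidablePred p] (x : ι → F) :
    hammingNorm (fun i : Subtype p => x i) = #{i | p i ∧ x i ≠ 0} := by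
  simp only [hammingNorm]
  rw [← Fintype.card_subtype, ← Fintype.card_subtype]
  exact Fintype.card_congr (Equiv.subtypeSubtypeEquivSubtypeInter p (fun i => x i ≠ 0))

lemma gbound_eq_sum_ceilDiv (q k d : ℕ) : gbound q k d = ∑ i ∈ range k, d ⌈/⌉ q ^ i := rfl

lemma Nat.ceilDiv_ceilDiv {a b : ℕ} (ha : 0 < a) (hb : 0 < b) (d : ℕ) :
    d ⌈/⌉ a ⌈/⌉ b = d ⌈/⌉ (a * b) :=
  eq_of_forall_ge_iff fun c => by
    rw [ceilDiv_le_iff_le_mul hb, ceilDiv_le_iff_le_mul ha, ceilDiv_le_iff_le_mul (mul_pos ha hb),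
      mul_assoc]

lemma gbound_mono_right (q k : ℕ) {d d' : ℕ} (h : d ≤ d') : gbound q k d ≤ gbound q k d' :=
  sum_le_sum fun _ _ => Nat.div_le_div_right (by omega)

lemma gbound_mono_left (q d : ℕ) {k k' : ℕ} (h : k ≤ k') : gbound q k d ≤ gbound q k' d :=
  sum_le_sum_of_subset (range_subset_range.mpr h)

lemma gbound_succ {q : ℕ} (hq : 0 < q) (k d : ℕ) :
    gbound q (k + 1) d = d + gbound q k (d ⌈/⌉ q) := by
  rw [gbound_eq_sum_ceilDiv, gbound_eq_sum_ceilDiv, sum_range_succ', add_comm]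
  congr 1
  · simp
  · exact sum_congr rfl fun i _ => by rw [Nat.ceilDiv_ceilDiv hq (pow_pos hq i), pow_succ']

lemma gbound_succ' (q k d : ℕ) : gbound q (k + 1) d = gbound q k d + d ⌈/⌉ q ^ k :=
  sum_range_succ _ _

lemma sum_range_pow_lt_gbound {q k d : ℕ} (hq : 0 < q) (hd : q ^ k < d) :
    ∑ i ∈ range (k + 1), q ^ i < gbound q (k + 1) d := by
  rw [← sum_range_reflect, gbound_eq_sum_ceilDiv]
  refine sum_lt_sum_of_nonempty nonempty_range_add_one fun i hi => ?_
  rw [mem_range] at hi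
  rw [← not_le, ceilDiv_le_iff_le_mul (pow_pos hq _), ← pow_add, Nat.add_sub_cancel,
    Nat.add_sub_cancel' (by omega)]
  omega

lemma Finset.exists_ceilDiv_card_le_card_fiber {α β : Type*} [Fintype β] [Nonempty β]
    [DecidableEq β] (s : Finset α) (g : α → β) :
    ∃ y, #s ⌈/⌉ Fintype.card β ≤ #{x ∈ s | g x = y} := by
  obtain rfl | hs := s.eq_empty_or_nonempty
  · simp
  have hq : 0 < Fintype.card β := Fintype.card_pos
  have hpos : ¬ #s ⌈/⌉ Fintype.card β ≤ 0 := by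
    rw [ceilDiv_le_iff_le_mul hq, mul_zero, Nat.le_zero, card_eq_zero]
    exact hs.ne_empty
  have hlt : ¬ #s ⌈/⌉ Fintype.card β ≤ #s ⌈/⌉ Fintype.card β - 1 := by omega
  rw [ceilDiv_le_iff_le_mul hq, not_le] at hlt
  obtain ⟨y, -, hy⟩ := exists_lt_card_fiber_of_mul_lt_card_of_maps_to
    (fun a _ => mem_univ (g a)) (by rwa [card_univ])
  exact ⟨y, by omega⟩

section
variable {ι F : Type*} [Fintype ι] [Field F]
variable {V : Type*} [AddCommGroup V] [Module F V] [FiniteDimensional F V]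

lemma ceilDiv_le_hammingNorm_residual [Fintype F] [DecidableEq F] (u v : ι → F)
    (h : ∀ α : F, hammingNorm u ≤ hammingNorm (v - α • u)) :
    hammingNorm u ⌈/⌉ Fintype.card F ≤ hammingNorm (fun i : {i // u i = 0} => v i) := by
  obtain ⟨α, hα⟩ := exists_ceilDiv_card_le_card_fiber {i | u i ≠ 0} (fun i => v i / u i)
  have hsupp : #{i | u i ≠ 0} = hammingNorm u := rfl
  have hfib := card_filter_add_card_filter_not (s := {i | u i ≠ 0}) (fun i => v i / u i = α)
  have hsplit : hammingNorm (v - α • u) =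
      #{i | u i = 0 ∧ (v - α • u) i ≠ 0} + #{i | u i ≠ 0 ∧ (v - α • u) i ≠ 0} := by
    rw [hammingNorm, ← card_filter_add_card_filter_not (fun i => u i = 0), filter_filter,
      filter_filter]
    simp only [and_comm]
  have hzero : #{i | u i = 0 ∧ (v - α • u) i ≠ 0} = #{i | u i = 0 ∧ v i ≠ 0} :=
    congrArg card <| filter_congr fun i _ => and_congr_right fun hu => by simp [hu]
  have hne : #{i | u i ≠ 0 ∧ (v - α • u) i ≠ 0} = #{i ∈ {i | u i ≠ 0} | ¬ v i / u i = α} := by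
    rw [filter_filter]
    exact congrArg card <| filter_congr fun i _ => and_congr_right fun hu => by
      rw [Pi.sub_apply, Pi.smul_apply, smul_eq_mul, sub_ne_zero, div_eq_iff hu]
  rw [hsupp] at hα hfib
  rw [hammingNorm_comp_subtypeVal]
  have := h α
  omega

lemma card_zeroSet_add_hammingNorm [DecidableEq F] (u : ι → F) :
    Fintype.card {i // u i = 0} + hammingNorm u = Fintype.card ι := by
  rw [Fintype.card_subtype, hammingNorm, card_filter_add_card_filter_not, card_univ]

theorem gbound_le_card_of_le_hammingNorm [Fintype F] [DecidableEq F] (f : V →ₗ[F] ι → F) {d : ℕ}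
    (hd : ∀ v ≠ 0, d ≤ hammingNorm (f v)) :
    gbound (Fintype.card F) (finrank F V) d ≤ Fintype.card ι := by
  obtain ⟨k, hk⟩ : ∃ k, finrank F V = k := ⟨_, rfl⟩
  induction k generalizing V ι d with
  | zero => simp [hk, gbound]
  | succ k ih =>
    have hpos : 0 < finrank F V := by omega
    obtain ⟨v₀, hv₀⟩ := finrank_pos_iff_exists_ne_zero.mp hpos
    obtain ⟨w, ⟨c, hc, rfl⟩, hmin⟩ := WellFounded.has_min wellFounded_lt
      {n | ∃ c ≠ 0, hammingNorm (f c) = n} ⟨_, v₀, hv₀, rfl⟩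
    set u := f c
    let ρ : (ι → F) →ₗ[F] ({i // u i = 0} → F) := LinearMap.funLeft F F Subtype.val
    let g := (F ∙ c).liftQ (ρ ∘ₗ f) <| (Submodule.span_singleton_le_iff_mem _ _).mpr <| by
      ext i; exact i.2
    have hres : ∀ x ≠ 0, hammingNorm u ⌈/⌉ Fintype.card F ≤ hammingNorm (g x) := by
      rintro x hx
      obtain ⟨v, rfl⟩ := Submodule.Quotient.mk_surjective _ x
      refine ceilDiv_le_hammingNorm_residual u (f v) fun α => not_lt.mp fun hlt => hmin _
        ⟨v - α • c, fun h => hx ?_, by rw [map_sub, map_smul]⟩ hlt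
      rw [Submodule.Quotient.mk_eq_zero, Submodule.mem_span_singleton]
      exact ⟨α, (sub_eq_zero.mp h).symm⟩
    have hfin : finrank F (V ⧸ F ∙ c) = k := by
      have := Submodule.finrank_quotient_add_finrank (F ∙ c)
      rw [finrank_span_singleton hc] at this
      omega
    have hq : 0 < Fintype.card F := Fintype.card_pos
    rw [hk]
    calc gbound (Fintype.card F) (k + 1) d
        ≤ gbound (Fintype.card F) (k + 1) (hammingNorm u) := gbound_mono_right _ _ (hd c hc)
      _ = hammingNorm u + gbound (Fintype.card F) k (hammingNorm u ⌈/⌉ Fintype.card F) :=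
        gbound_succ hq _ _
      _ ≤ hammingNorm u + Fintype.card {i // u i = 0} := by
        gcongr; exact hfin ▸ ih g hres hfin
      _ = Fintype.card ι := by rw [add_comm, card_zeroSet_add_hammingNorm]

theorem gbound_add_two_le_card [Fintype F] [DecidableEq F] [DecidableEq ι] (f : V →ₗ[F] ι → F)
    {d : ℕ} (hd : ∀ v ≠ 0, d ≤ hammingNorm (f v))
    {j j' : ι} (hj : j ≠ j') (hvan : ∀ v, f v j' = 0 → f v j = 0) :
    gbound (Fintype.card F) (finrank F V - 1) d + 2 ≤ Fintype.card ι := by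
  have hrank : finrank F V - 1 ≤ finrank F (LinearMap.ker (LinearMap.proj j' ∘ₗ f)) := by
    have := LinearMap.finrank_range_add_finrank_ker (LinearMap.proj j' ∘ₗ f)
    have := (LinearMap.range (LinearMap.proj j' ∘ₗ f)).finrank_le
    rw [finrank_self] at this
    omega
  set K := LinearMap.ker (LinearMap.proj j' ∘ₗ f)
  let ρ : (ι → F) →ₗ[F] ({i // i ≠ j ∧ i ≠ j'} → F) := LinearMap.funLeft F F Subtype.val
  have hK : ∀ v : K, hammingNorm (ρ (f v)) = hammingNorm (f v) := by
    intro v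
    have hj' : f v j' = 0 := v.2
    have hj : f v j = 0 := hvan _ hj'
    refine (hammingNorm_comp_subtypeVal _ _).trans (congrArg card (filter_congr fun i _ => ?_))
    exact ⟨And.right, fun hi => ⟨⟨by rintro rfl; exact hi hj, by rintro rfl; exact hi hj'⟩, hi⟩⟩
  have hcard : Fintype.card {i // i ≠ j ∧ i ≠ j'} + 2 = Fintype.card ι := by
    have hcompl : ({i | i ≠ j ∧ i ≠ j'} : Finset ι) = {j, j'}ᶜ := by ext; simp
    have := card_le_univ ({j, j'} : Finset ι)
    rw [Fintype.card_subtype, hcompl, card_compl, card_pair hj] at *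
    omega
  calc gbound (Fintype.card F) (finrank F V - 1) d + 2
      ≤ gbound (Fintype.card F) (finrank F K) d + 2 := by gcongr; exact gbound_mono_left _ _ hrank
    _ ≤ Fintype.card {i // i ≠ j ∧ i ≠ j'} + 2 := by
      gcongr
      exact gbound_le_card_of_le_hammingNorm (ρ ∘ₗ f ∘ₗ K.subtype) fun v hv =>
        (hK v).symm ▸ hd v (by simpa using hv)
    _ = Fintype.card ι := hcard

theorem card_le_sum_pow_of_not_proportional [Fintype F] (v : ι → V) (hv : ∀ j, v j ≠ 0)
    (hproj : ∀ j j', j ≠ j' → ¬ ∃ lam : F, lam ≠ 0 ∧ v j = lam • v j') :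
    Fintype.card ι ≤ ∑ i ∈ range (finrank F V), Fintype.card F ^ i := by
  have : Finite V := Module.finite_of_finite F
  have hinj : Function.Injective fun j => Projectivization.mk F (v j) (hv j) := by
    intro j j' h
    by_contra hne
    obtain ⟨a, ha⟩ := (Projectivization.mk_eq_mk_iff F _ _ (hv j) (hv j')).mp h
    exact hproj j j' hne ⟨a, a.ne_zero, ha.symm⟩
  have := Nat.card_le_card_of_injective _ hinj
  rwa [Projectivization.card_of_finrank F V rfl, Nat.card_eq_fintype_card,
    Nat.card_eq_fintype_card] at this

end

theorem stmt4_general {F : Type*} [Field F] [Fintype F] {n k d : ℕ}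
    (G : Matrix (Fin k) (Fin n) F)
    (hcol : ∀ j, (fun i => G i j) ≠ 0)
    (hn : n = gbound (Fintype.card F) k d)
    (hmin : ∀ a : Fin k → F, a ≠ 0 → d ≤ wt (Matrix.vecMul a G))
    (hex : ∃ a : Fin k → F, a ≠ 0 ∧ wt (Matrix.vecMul a G) = d) :
    (∀ j j' : Fin n, j ≠ j' →
        ¬ ∃ lam : F, lam ≠ 0 ∧ (fun i => G i j) = lam • (fun i => G i j')) ↔
      d ≤ Fintype.card F ^ (k - 1) := by
  classical
  obtain ⟨a₀, ha₀, -⟩ := hex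
  obtain _ | k := k
  · exact absurd (Subsingleton.elim a₀ 0) ha₀
  have hq : 0 < Fintype.card F := Fintype.card_pos
  rw [Nat.add_sub_cancel]
  constructor
  · intro hproj
    by_contra! hlt
    have := card_le_sum_pow_of_not_proportional _ hcol hproj
    rw [Fintype.card_fin, finrank_fin_fun] at this
    exact (sum_range_pow_lt_gbound hq hlt).not_ge (hn ▸ this)
  · rintro hdk j j' hjj ⟨lam, -, hlam⟩
    have hd : ∀ a ≠ 0, d ≤ hammingNorm (Matrix.vecMulLinear G a) := fun a ha => by
      rw [Matrix.vecMulLinear_apply, ← wt_eq_hammingNorm]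
      exact hmin a ha
    have hshort := gbound_add_two_le_card (Matrix.vecMulLinear G) hd hjj fun a ha => by
      change a ⬝ᵥ (fun i => G i j) = 0
      change a ⬝ᵥ (fun i => G i j') = 0 at ha
      rw [hlam, dotProduct_smul, ha, smul_zero]
    have hlast : d ⌈/⌉ Fintype.card F ^ k ≤ 1 :=
      (ceilDiv_le_iff_le_mul (pow_pos hq k)).mpr (by rwa [mul_one])
    rw [finrank_fin_fun, Nat.add_sub_cancel, Fintype.card_fin] at hshort
    rw [gbound_succ'] at hn
    omega

theorem stmt4 {F : Type*} [Field F] [Fintype F] {n k d : ℕ}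
    (G : Matrix (Fin k) (Fin n) F)
    (hinj : Function.Injective fun a : Fin k → F => Matrix.vecMul a G)
    (hcol : ∀ j, (fun i => G i j) ≠ 0)
    (hn : n = gbound (Fintype.card F) k d)
    (hmin : ∀ a : Fin k → F, a ≠ 0 → d ≤ wt (Matrix.vecMul a G))
    (hex : ∃ a : Fin k → F, a ≠ 0 ∧ wt (Matrix.vecMul a G) = d) :
    (∀ j j' : Fin n, j ≠ j' →
        ¬ ∃ lam : F, lam ≠ 0 ∧ (fun i => G i j) = lam • (fun i => G i j')) ↔
      d ≤ Fintype.card F ^ (k - 1) :=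
  stmt4_general G hcol hn hmin hex
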